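/- In the winner-bid auction with v_l < v_h, the pure strategy profile σ_l = δ_{v_l/2 − 1}, σ_h = δ_{v_l/2} is a Nash equilibrium in which the bid v_l/2 is the unique best response of the higher-valuation agent to σ_l, and every bid b > v_l/2 is strictly worse than v_l/2 − 1 for the lower-valuation agent against σ_h. -/

import Mathlib

open Finset Filter

/-- Utility in the winner-bid auction for an agent with value `v` bidding `b`
when the opponent bids `c`: the higher bidder wins the object and pays their own
bid to the other agent; ties are broken uniformly at random. -/
noncomputable def util (v b c : ℕ) : ℝ :=
  if c < b then (v : ℝ) - b
  else if b < c then (c : ℝ)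
  else (((v : ℝ) - b) + b) / 2

/-- Expected utility of bidding `b` against the mixed strategy `σ` of the opponent. -/
noncomputable def eu (pbar v : ℕ) (σ : ℕ → ℝ) (b : ℕ) : ℝ :=
  ∑ c ∈ range (pbar + 1), σ c * util v b c

/-- A mixed strategy on the bid space `{0,...,pbar}`. -/
def IsStrategy (pbar : ℕ) (σ : ℕ → ℝ) : Prop :=
  (∀ b, 0 ≤ σ b) ∧ (∑ b ∈ range (pbar + 1), σ b = 1) ∧ ∀ b, pbar < b → σ b = 0

/-- Nash equilibrium of the winner-bid auction with valuations `vl` (agent l) and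
`vh` (agent h). -/
def IsNash (pbar vl vh : ℕ) (σl σh : ℕ → ℝ) : Prop :=
  IsStrategy pbar σl ∧ IsStrategy pbar σh ∧
  (∀ b ∈ range (pbar + 1), 0 < σl b →
    ∀ b' ∈ range (pbar + 1), eu pbar vl σh b' ≤ eu pbar vl σh b) ∧
  (∀ b ∈ range (pbar + 1), 0 < σh b →
    ∀ b' ∈ range (pbar + 1), eu pbar vh σl b' ≤ eu pbar vh σl b)

/-- Expected payoff of the agent with value `v` playing `σown` against `σopp`. -/
noncomputable def payoff (pbar v : ℕ) (σown σopp : ℕ → ℝ) : ℝ :=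
  ∑ b ∈ range (pbar + 1), σown b * eu pbar v σopp b

/-- Probability that the agent playing `σown` receives the object. -/
noncomputable def winProb (pbar : ℕ) (σown σopp : ℕ → ℝ) : ℝ :=
  ∑ b ∈ range (pbar + 1), ∑ c ∈ range (pbar + 1),
    σown b * σopp c * (if c < b then 1 else if b < c then 0 else 1 / 2)

/-- An equilibrium is efficient if the higher-valuation agent (playing `σh`)
receives the object with probability one, i.e., the lower-valuation agent
receives it with probability zero. -/
def Efficient (pbar : ℕ) (σl σh : ℕ → ℝ) : Prop := winProb pbar σl σh = 0

/-- The pure strategy bidding `b`. -/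
noncomputable def pureS (b : ℕ) : ℕ → ℝ := fun c => if c = b then 1 else 0

/-- Weak payoff monotonicity for the agent with value `v` playing `σown` against `σopp`. -/
def WPMon (pbar v : ℕ) (σown σopp : ℕ → ℝ) : Prop :=
  ∀ m ∈ range (pbar + 1), ∀ n ∈ range (pbar + 1),
    σown n < σown m → eu pbar v σopp n < eu pbar v σopp m

/-- (Full) payoff monotonicity for the agent with value `v`. -/
def PMon (pbar v : ℕ) (σown σopp : ℕ → ℝ) : Prop :=
  ∀ m ∈ range (pbar + 1), ∀ n ∈ range (pbar + 1),
    (eu pbar v σopp n ≤ eu pbar v σopp m ↔ σown n ≤ σown m)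

/-- Empirical equilibrium: a Nash equilibrium that is the pointwise limit of a
sequence of weakly payoff monotone strategy profiles. -/
def IsEmpirical (pbar vl vh : ℕ) (σl σh : ℕ → ℝ) : Prop :=
  IsNash pbar vl vh σl σh ∧
  ∃ s : ℕ → (ℕ → ℝ) × (ℕ → ℝ),
    (∀ n, IsStrategy pbar (s n).1 ∧ IsStrategy pbar (s n).2 ∧
      WPMon pbar vl (s n).1 (s n).2 ∧ WPMon pbar vh (s n).2 (s n).1) ∧
    ∀ b, Tendsto (fun n => (s n).1 b) atTop (nhds (σl b)) ∧
         Tendsto (fun n => (s n).2 b) atTop (nhds (σh b))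

/-!
Against a pure strategy `δ_c` the expected utility of a bid `b` is just `util v b c`, so the
claim is a comparison of finitely many numbers. With `k = v_l / 2`: against `δ_{k-1}` the
high agent gets `v_h - b` for `b ≥ k`, the tie value `v_h / 2` at `k - 1`, and `k - 1` below,
and `v_h - k` beats all of them because `2k < v_h`. Against `δ_k` the low agent gets `k` by
underbidding, `k = v_l / 2` at the tie, and `v_l - b < k` by overbidding.
-/

section Util

variable {v b c : ℕ}

lemma util_of_lt (h : c < b) : util v b c = v - b := by
  simp [util, h]

lemma util_of_gt (h : b < c) : util v b c = c := by
  simp [util, h, h.not_gt]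

lemma util_self : util v b b = v / 2 := by
  simp [util]

lemma util_lt_of_lt (hv : v ≤ 2 * c) (hb : c < b) : util v b c < c := by
  rw [util_of_lt hb]
  have : (v : ℝ) ≤ 2 * c := by exact_mod_cast hv
  have : (c : ℝ) < b := by exact_mod_cast hb
  linarith

lemma util_le (hv : v ≤ 2 * c) : util v b c ≤ c := by
  rcases lt_trichotomy c b with hcb | rfl | hbc
  · exact (util_lt_of_lt hv hcb).le
  · have : (v : ℝ) ≤ 2 * c := by exact_mod_cast hv
    rw [util_self]; linarith
  · exact (util_of_gt hbc).le

lemma util_lt_util_succ (hv : 2 * (c + 1) < v) (hb : b ≠ c + 1) :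
    util v b c < util v (c + 1) c := by
  rw [util_of_lt c.lt_succ_self]
  have hvR : 2 * ((c : ℝ) + 1) < v := by exact_mod_cast hv
  rcases lt_trichotomy c b with hcb | rfl | hbc
  · have : (c : ℝ) + 1 < b := by exact_mod_cast (show c + 1 < b by omega)
    rw [util_of_lt hcb]; push_cast; linarith
  · rw [util_self]; push_cast; linarith
  · rw [util_of_gt hbc]; push_cast; linarith

end Util

section PureStrategies

variable {pbar v b c : ℕ}

lemma eu_pureS (hc : c ≤ pbar) : eu pbar v (pureS c) b = util v b c := by
  rw [eu, Finset.sum_eq_single_of_mem c (mem_range.2 (Nat.lt_succ_of_le hc))]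
  · simp [pureS]
  · intro b' _ h; simp [pureS, h]

lemma isStrategy_pureS (hc : c ≤ pbar) : IsStrategy pbar (pureS c) := by
  refine ⟨fun b => ?_, ?_, fun b hb => if_neg (by omega)⟩
  · unfold pureS; split_ifs <;> norm_num
  · simp [pureS, Nat.lt_succ_of_le hc]

lemma eq_of_pureS_pos (h : 0 < pureS c b) : b = c := by
  by_contra hne
  simp [pureS, hne] at h

lemma isNash_pureS {vl vh bl bh : ℕ} (hbl : bl ≤ pbar) (hbh : bh ≤ pbar)
    (hl : ∀ b ≤ pbar, util vl b bh ≤ util vl bl bh)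
    (hh : ∀ b ≤ pbar, util vh b bl ≤ util vh bh bl) :
    IsNash pbar vl vh (pureS bl) (pureS bh) := by
  refine ⟨isStrategy_pureS hbl, isStrategy_pureS hbh, ?_, ?_⟩
  · rintro b - hpos b' hb'
    rw [eq_of_pureS_pos hpos, eu_pureS hbh, eu_pureS hbh]
    exact hl b' (Nat.lt_succ_iff.1 (mem_range.1 hb'))
  · rintro b - hpos b' hb'
    rw [eq_of_pureS_pos hpos, eu_pureS hbl, eu_pureS hbl]
    exact hh b' (Nat.lt_succ_iff.1 (mem_range.1 hb'))

end PureStrategies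

theorem stmt14_general (vl vh pbar : ℕ) (hvl : 4 ≤ vl) (hevl : Even vl)
    (hlt : vl < vh) (hpbar : vh / 2 + 2 ≤ pbar) :
    IsNash pbar vl vh (pureS (vl / 2 - 1)) (pureS (vl / 2)) ∧
    (∀ b ∈ range (pbar + 1), b ≠ vl / 2 →
      eu pbar vh (pureS (vl / 2 - 1)) b < eu pbar vh (pureS (vl / 2 - 1)) (vl / 2)) ∧
    (∀ b ∈ range (pbar + 1), vl / 2 < b →
      eu pbar vl (pureS (vl / 2)) b < eu pbar vl (pureS (vl / 2)) (vl / 2 - 1)) := by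
  obtain ⟨k, rfl⟩ := hevl
  obtain ⟨c, rfl⟩ : ∃ c, k = c + 1 := ⟨k - 1, by omega⟩
  have hhalf : (c + 1 + (c + 1)) / 2 = c + 1 := by omega
  simp only [hhalf, Nat.add_sub_cancel]
  have hc : c ≤ pbar := by omega
  have hk : c + 1 ≤ pbar := by omega
  have hvl2 : c + 1 + (c + 1) ≤ 2 * (c + 1) := by omega
  have hl_best : util (c + 1 + (c + 1)) c (c + 1) = (c + 1 : ℕ) := util_of_gt c.lt_succ_self
  have hh_best : ∀ b ≠ c + 1, util vh b c < util vh (c + 1) c :=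
    fun b hb => util_lt_util_succ (by omega) hb
  refine ⟨isNash_pureS hc hk (fun b _ => hl_best ▸ util_le hvl2) (fun b _ => ?_), ?_, ?_⟩
  · rcases eq_or_ne b (c + 1) with rfl | hb
    exacts [le_rfl, (hh_best b hb).le]
  · intro b _ hb
    rw [eu_pureS hc, eu_pureS hc]
    exact hh_best b hb
  · intro b _ hb
    rw [eu_pureS hk, eu_pureS hk, hl_best]
    exact util_lt_of_lt hvl2 hb

theorem stmt14 (vl vh pbar : ℕ) (hvl : 4 ≤ vl) (hevl : Even vl) (hevh : Even vh)
    (hlt : vl < vh) (hpbar : vh / 2 + 2 ≤ pbar) :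
    IsNash pbar vl vh (pureS (vl / 2 - 1)) (pureS (vl / 2)) ∧
    (∀ b ∈ range (pbar + 1), b ≠ vl / 2 →
      eu pbar vh (pureS (vl / 2 - 1)) b < eu pbar vh (pureS (vl / 2 - 1)) (vl / 2)) ∧
    (∀ b ∈ range (pbar + 1), vl / 2 < b →
      eu pbar vl (pureS (vl / 2)) b < eu pbar vl (pureS (vl / 2)) (vl / 2 - 1)) :=
  stmt14_general vl vh pbar hvl hevl hlt hpbar
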